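/- arXiv:2412.17930 — 3 statements merged into one kernel-verified Lean document; each statement's English description precedes it below -/
import Mathlib

section
/- For the regular paperfolding sequence (unfolding instructions all equal to 1), if n ≡ 1 (mod 4) then the ending position h(n) of the n-th maximal run satisfies h(n) = 2n. -/
/-!
Write `q` for `regularPaperfolding`, given by `q (2m) = q m` and `q (2i+1) = (-1)^i`. The unfolding
rule `P_{f·1} = P_f · 1 · (-P_f^R)` produces exactly `q`, because `q (2^m) = 1` and
`q (2^m + k) = -q (2^m - k)`. As the odd-indexed terms alternate and all terms are `±1`, each pair of
positions `{2i+1, 2i+2}` contains exactly one run end, so the `n`-th run ends at `2n - 1` or `2n`.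
For `n ≡ 1 (mod 4)` positions `2n - 1` and `2n` both carry `1`, so it ends at `2n`.
-/

/-- Paperfolding word; instructions are given with the most recent (last) instruction first. -/
def foldAux : List ℤ → List ℤ
  | [] => []
  | a :: f => foldAux f ++ a :: (foldAux f).reverse.map (fun x => -x)

/-- `paper f` is the finite paperfolding word `P_f` for instructions `f = [f_0, f_1, …]`,
satisfying `P_ε = ε` and `P_{f·a} = P_f · a · (-P_f^R)`. -/
def paper (f : List ℤ) : List ℤ := foldAux f.reverse

/-- The sequence of lengths of the maximal runs (maximal blocks of equal symbols) of `w`. -/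
def runLengths (w : List ℤ) : List ℕ := (w.splitBy (fun a b => a == b)).map List.length

/-- `p` (indexed from 1) is the infinite paperfolding sequence with instructions `f`,
i.e. every finite paperfolding word of a prefix of `f` is a prefix of `p`. -/
def IsLimit (f : ℕ → ℤ) (p : ℕ → ℤ) : Prop :=
  ∀ m k, k < (paper ((List.range m).map f)).length →
    p (k + 1) = (paper ((List.range m).map f)).getD k 0

/-- `E` enumerates, in increasing order (`E 1 < E 2 < ⋯`, with the convention `E 0 = 0`),
the ending positions of the maximal runs of the sequence `p` (indexed from 1):
position `m ≥ 1` ends a run iff `p m ≠ p (m+1)`. -/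
def IsRunEnds (p : ℕ → ℤ) (E : ℕ → ℕ) : Prop :=
  E 0 = 0 ∧ StrictMono E ∧ ∀ m, 1 ≤ m → ((∃ n, 1 ≤ n ∧ E n = m) ↔ p m ≠ p (m + 1))

namespace IsRunEnds

variable {p : ℕ → ℤ} {E : ℕ → ℕ}

lemma one_le_apply (hE : IsRunEnds p E) {n : ℕ} (hn : 1 ≤ n) : 1 ≤ E n := by
  have := hE.2.1 (show 0 < n by omega)
  rw [hE.1] at this
  omega

lemma apply_ne_apply_succ (hE : IsRunEnds p E) {n : ℕ} (hn : 1 ≤ n) :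
    p (E n) ≠ p (E n + 1) :=
  (hE.2.2 _ (hE.one_le_apply hn)).1 ⟨n, hn, rfl⟩

lemma apply_succ_eq (hE : IsRunEnds p E) {k b : ℕ} (hlt : E k < b) (hb : p b ≠ p (b + 1))
    (hgap : ∀ m, E k < m → m < b → p m = p (m + 1)) : E (k + 1) = b := by
  obtain ⟨t, -, rfl⟩ := (hE.2.2 b (by omega)).2 hb
  have hle : E (k + 1) ≤ E t := hE.2.1.monotone (hE.2.1.lt_iff_lt.1 hlt)
  refine hle.eq_or_lt.resolve_right fun hlt' => ?_
  exact hE.apply_ne_apply_succ k.succ_pos (hgap _ (hE.2.1 k.lt_succ_self) hlt')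

lemma apply_mem_Icc (hE : IsRunEnds p E)
    (hpair : ∀ i, Xor (p (2 * i + 1) ≠ p (2 * i + 2)) (p (2 * i + 2) ≠ p (2 * i + 3)))
    (n : ℕ) : E n ∈ Set.Icc (2 * n - 1) (2 * n) := by
  induction n with
  | zero => simp [hE.1]
  | succ n ih =>
    rw [Set.mem_Icc] at ih ⊢
    have hgap : ∀ m, E n < m → m ≤ 2 * n → p m = p (m + 1) := by
      intro m hm hm'
      obtain ⟨i, rfl⟩ : ∃ i, n = i + 1 := ⟨n - 1, by omega⟩
      obtain ⟨rfl, hEi⟩ : m = 2 * i + 2 ∧ E (i + 1) = 2 * i + 1 := by omega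
      have hend := hE.apply_ne_apply_succ (n := i + 1) (by omega)
      rw [hEi] at hend
      rcases hpair i with ⟨-, h⟩ | ⟨-, h⟩
      · exact not_not.1 h
      · exact absurd hend h
    rcases hpair n with ⟨hb, -⟩ | ⟨hb, hb'⟩
    · have := hE.apply_succ_eq (k := n) (by omega) hb fun m h1 h2 => hgap m h1 (by omega)
      omega
    · have := hE.apply_succ_eq (k := n) (by omega) hb fun m h1 h2 => by
        rcases (show m ≤ 2 * n ∨ m = 2 * n + 1 by omega) with hm | rfl
        · exact hgap m h1 hm
        · exact not_not.1 hb'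
      omega

end IsRunEnds

def regularPaperfolding : ℕ → ℤ
  | 0 => 1
  | m + 1 =>
    if (m + 1) % 2 = 1 then (-1) ^ ((m + 1) / 2) else regularPaperfolding ((m + 1) / 2)
decreasing_by omega

lemma regularPaperfolding_two_mul_add_one (i : ℕ) :
    regularPaperfolding (2 * i + 1) = (-1) ^ i := by
  rw [regularPaperfolding, if_pos (by omega), show (2 * i + 1) / 2 = i by omega]

lemma regularPaperfolding_two_mul (m : ℕ) : regularPaperfolding (2 * m) = regularPaperfolding m := by
  cases m with
  | zero => rfl
  | succ m =>
    rw [show 2 * (m + 1) = 2 * m + 1 + 1 by ring, regularPaperfolding, if_neg (by omega),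
      show (2 * m + 1 + 1) / 2 = m + 1 by omega]

lemma regularPaperfolding_four_mul_add_one (j : ℕ) : regularPaperfolding (4 * j + 1) = 1 := by
  rw [show 4 * j + 1 = 2 * (2 * j) + 1 by ring, regularPaperfolding_two_mul_add_one, pow_mul]
  norm_num

lemma regularPaperfolding_two_pow (m : ℕ) : regularPaperfolding (2 ^ m) = 1 := by
  induction m with
  | zero => exact regularPaperfolding_two_mul_add_one 0
  | succ m ih => rw [pow_succ', regularPaperfolding_two_mul, ih]

lemma regularPaperfolding_eq_one_or_neg_one (m : ℕ) :
    regularPaperfolding m = 1 ∨ regularPaperfolding m = -1 := by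
  induction m using Nat.evenOddRec with
  | h0 => left; rw [regularPaperfolding]
  | h_even m ih => rwa [regularPaperfolding_two_mul]
  | h_odd i _ => rw [regularPaperfolding_two_mul_add_one]; exact neg_one_pow_eq_or ℤ i

lemma regularPaperfolding_two_pow_add (m k : ℕ) (hk0 : 0 < k) (hk : k < 2 ^ m) :
    regularPaperfolding (2 ^ m + k) = -regularPaperfolding (2 ^ m - k) := by
  induction m generalizing k with
  | zero => omega
  | succ m ih =>
    have h2m : 2 ^ (m + 1) = 2 * 2 ^ m := pow_succ' 2 m
    rcases Nat.even_or_odd' k with ⟨t, rfl | rfl⟩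
    · rw [show 2 ^ (m + 1) + 2 * t = 2 * (2 ^ m + t) by omega,
        show 2 ^ (m + 1) - 2 * t = 2 * (2 ^ m - t) by omega, regularPaperfolding_two_mul,
        regularPaperfolding_two_mul, ih t (by omega) (by omega)]
    · rw [show 2 ^ (m + 1) + (2 * t + 1) = 2 * (2 ^ m - t - 1 + (2 * t + 1)) + 1 by omega,
        show 2 ^ (m + 1) - (2 * t + 1) = 2 * (2 ^ m - t - 1) + 1 by omega,
        regularPaperfolding_two_mul_add_one, regularPaperfolding_two_mul_add_one, pow_add,
        Odd.neg_one_pow ⟨t, rfl⟩]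
      ring

lemma regularPaperfolding_runEnd_xor (i : ℕ) :
    Xor (regularPaperfolding (2 * i + 1) ≠ regularPaperfolding (2 * i + 2))
      (regularPaperfolding (2 * i + 2) ≠ regularPaperfolding (2 * i + 3)) := by
  rw [show 2 * i + 3 = 2 * (i + 1) + 1 by ring, regularPaperfolding_two_mul_add_one,
    regularPaperfolding_two_mul_add_one, pow_succ]
  rcases neg_one_pow_eq_or ℤ i with h | h <;>
    rcases regularPaperfolding_eq_one_or_neg_one (2 * i + 2) with h' | h' <;>
    simp [h, h', Xor]

lemma paper_append_singleton (f : List ℤ) (a : ℤ) :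
    paper (f ++ [a]) = paper f ++ a :: (paper f).reverse.map (fun x => -x) := by
  rw [paper, List.reverse_append]
  rfl

lemma length_paper_replicate (m : ℕ) : (paper (List.replicate m 1)).length = 2 ^ m - 1 := by
  induction m with
  | zero => rfl
  | succ m ih =>
    rw [List.replicate_succ', paper_append_singleton]
    simp only [List.length_append, List.length_cons, List.length_map, List.length_reverse, ih]
    have := Nat.one_le_two_pow (n := m)
    rw [pow_succ]
    omega

lemma getElem_paper_replicate (m k : ℕ) (hk : k < (paper (List.replicate m 1)).length) :
    (paper (List.replicate m 1))[k] = regularPaperfolding (k + 1) := by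
  induction m generalizing k with
  | zero => simp [paper, foldAux] at hk
  | succ m ih =>
    have hlen := length_paper_replicate m
    have hlen' := length_paper_replicate (m + 1)
    have h1 := Nat.one_le_two_pow (n := m)
    have h2m : 2 ^ (m + 1) = 2 * 2 ^ m := pow_succ' 2 m
    simp only [List.replicate_succ', paper_append_singleton] at hk ⊢
    rcases lt_trichotomy k (2 ^ m - 1) with hk' | rfl | hk'
    · rw [List.getElem_append_left (by omega), ih k]
    · rw [List.getElem_append_right (by omega)]
      simp [hlen, show 2 ^ m - 1 + 1 = 2 ^ m by omega, regularPaperfolding_two_pow]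
    · obtain ⟨r, rfl⟩ : ∃ r, k = 2 ^ m + r := ⟨k - 2 ^ m, by omega⟩
      rw [List.getElem_append_right (by omega), List.getElem_cons, dif_neg (by omega),
        List.getElem_map, List.getElem_reverse, ih _ (by omega), add_assoc,
        regularPaperfolding_two_pow_add m (r + 1) (by omega) (by omega)]
      congr 2
      omega

lemma IsLimit.eq_regularPaperfolding {p : ℕ → ℤ} (hp : IsLimit (fun _ => 1) p) {m : ℕ}
    (hm : 1 ≤ m) : p m = regularPaperfolding m := by
  obtain ⟨k, rfl⟩ : ∃ k, m = k + 1 := ⟨m - 1, by omega⟩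
  have hpaper : paper ((List.range (k + 1)).map fun _ => (1 : ℤ)) =
      paper (List.replicate (k + 1) 1) := by
    simp [List.map_const']
  have hk : k < (paper (List.replicate (k + 1) 1)).length := by
    rw [length_paper_replicate]
    have : k + 1 < 2 ^ (k + 1) := Nat.lt_two_pow_self
    omega
  have := hp (k + 1) k (hpaper ▸ hk)
  rwa [hpaper, List.getD_eq_getElem _ _ hk, getElem_paper_replicate] at this

theorem regular_runEnd_one_mod_four (p : ℕ → ℤ) (E : ℕ → ℕ)
    (hp : IsLimit (fun _ => 1) p) (hE : IsRunEnds p E) :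
    ∀ n, n % 4 = 1 → E n = 2 * n := by
  intro n hn
  obtain ⟨j, rfl⟩ : ∃ j, n = 4 * j + 1 := ⟨n / 4, by omega⟩
  have hpq : ∀ m, 1 ≤ m → p m = regularPaperfolding m := fun m => hp.eq_regularPaperfolding
  have hpair : ∀ i, Xor (p (2 * i + 1) ≠ p (2 * i + 2)) (p (2 * i + 2) ≠ p (2 * i + 3)) := by
    intro i
    rw [hpq _ (by omega), hpq _ (by omega), hpq _ (by omega)]
    exact regularPaperfolding_runEnd_xor i
  have hend : E (4 * j + 1) ≠ 8 * j + 1 := by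
    intro h
    have hne := hE.apply_ne_apply_succ (n := 4 * j + 1) (by omega)
    rw [h, hpq _ (by omega), hpq _ (by omega), show 8 * j + 1 + 1 = 2 * (4 * j + 1) by ring,
      regularPaperfolding_two_mul, show 8 * j + 1 = 4 * (2 * j) + 1 by ring,
      regularPaperfolding_four_mul_add_one, regularPaperfolding_four_mul_add_one] at hne
    exact hne rfl
  have hbounds := Set.mem_Icc.1 (hE.apply_mem_Icc hpair (4 * j + 1))
  omega
end

section
/- For the regular paperfolding sequence, the n-th run has length 1 if and only if n ≡ 2 or 7 (mod 8). -/
/-- `regularFold (2 ^ a * (4 * b + 1)) = 1` and `regularFold (2 ^ a * (4 * b + 3)) = -1`;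
the value at `0` is irrelevant. -/
def regularFold : ℕ → ℤ
  | 0 => 1
  | n + 1 =>
    if (n + 1) % 2 = 0 then regularFold ((n + 1) / 2)
    else if (n + 1) % 4 = 1 then 1 else -1

theorem regularFold_two_mul (n : ℕ) : regularFold (2 * n) = regularFold n := by
  rcases n with _ | n
  · rfl
  · rw [show 2 * (n + 1) = 2 * n + 1 + 1 by ring, regularFold,
      if_pos (by omega), show (2 * n + 1 + 1) / 2 = n + 1 by omega]

theorem regularFold_of_mod_four_eq_one {n : ℕ} (h : n % 4 = 1) : regularFold n = 1 := by
  obtain ⟨m, rfl⟩ : ∃ m, n = m + 1 := ⟨n - 1, by omega⟩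
  rw [regularFold, if_neg (by omega), if_pos h]

theorem regularFold_of_mod_four_eq_three {n : ℕ} (h : n % 4 = 3) : regularFold n = -1 := by
  obtain ⟨m, rfl⟩ : ∃ m, n = m + 1 := ⟨n - 1, by omega⟩
  rw [regularFold, if_neg (by omega), if_neg (by omega)]

theorem regularFold_eq_one_or_eq_neg_one (n : ℕ) : regularFold n = 1 ∨ regularFold n = -1 := by
  induction n using Nat.strong_induction_on with
  | _ n ih =>
    obtain ⟨s, rfl | rfl⟩ := Nat.even_or_odd' n
    · rcases s.eq_zero_or_pos with rfl | hs
      · exact Or.inl (by simp [regularFold])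
      · rw [regularFold_two_mul]
        exact ih s (by omega)
    · rcases Nat.even_or_odd s with ⟨t, rfl⟩ | ⟨t, rfl⟩
      · exact Or.inl (regularFold_of_mod_four_eq_one (by omega))
      · exact Or.inr (regularFold_of_mod_four_eq_three (by omega))

theorem regularFold_two_pow (m : ℕ) : regularFold (2 ^ m) = 1 := by
  induction m with
  | zero => exact regularFold_of_mod_four_eq_one (by norm_num)
  | succ m ih => rw [pow_succ, mul_comm, regularFold_two_mul, ih]

theorem regularFold_eq_neg_of_odd {a b : ℕ} (ha : a % 2 = 1) (hab : (a + b) % 4 = 0) :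
    regularFold a = -regularFold b := by
  rcases (by omega : a % 4 = 1 ∨ a % 4 = 3) with h | h
  · rw [regularFold_of_mod_four_eq_one h, regularFold_of_mod_four_eq_three (by omega), neg_neg]
  · rw [regularFold_of_mod_four_eq_three h, regularFold_of_mod_four_eq_one (by omega)]

theorem regularFold_two_pow_add (m : ℕ) {t : ℕ} (ht : 0 < t) (htm : t < 2 ^ m) :
    regularFold (2 ^ m + t) = -regularFold (2 ^ m - t) := by
  induction m generalizing t with
  | zero => omega
  | succ m ih =>
    have hpow : 2 ^ (m + 1) = 2 * 2 ^ m := by ring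
    obtain ⟨s, rfl | rfl⟩ := Nat.even_or_odd' t
    · rw [hpow, ← mul_add, ← Nat.mul_sub, regularFold_two_mul, regularFold_two_mul]
      exact ih (by omega) (by omega)
    · refine regularFold_eq_neg_of_odd (by omega) ?_
      rcases m with _ | m
      · omega
      · rw [show 2 ^ (m + 1 + 1) = 4 * 2 ^ m by ring]
        omega

theorem length_foldAux_replicate_one (m : ℕ) :
    (foldAux (List.replicate m 1)).length = 2 ^ m - 1 := by
  induction m with
  | zero => rfl
  | succ m ih =>
    have := Nat.one_le_two_pow (n := m)
    simp only [List.replicate_succ, foldAux, List.length_append, List.length_cons,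
      List.length_map, List.length_reverse, ih, pow_succ]
    omega

theorem getElem_foldAux_replicate_one (m k : ℕ) (hk : k < (foldAux (List.replicate m 1)).length) :
    (foldAux (List.replicate m 1))[k] = regularFold (k + 1) := by
  induction m generalizing k with
  | zero => simp [foldAux] at hk
  | succ m ih =>
    have hlen := length_foldAux_replicate_one m
    have hpos := Nat.one_le_two_pow (n := m)
    simp only [List.replicate_succ, foldAux] at hk ⊢
    rw [List.length_append, List.length_cons, List.length_map, List.length_reverse, hlen] at hk
    rcases lt_trichotomy k (2 ^ m - 1) with h | rfl | h
    · rw [List.getElem_append_left (by omega)]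
      exact ih k _
    · rw [List.getElem_append_right (by omega)]
      simp [hlen, show 2 ^ m - 1 + 1 = 2 ^ m by omega, regularFold_two_pow]
    · rw [List.getElem_append_right (by omega)]
      obtain ⟨i, rfl⟩ : ∃ i, k = 2 ^ m + i := ⟨k - 2 ^ m, by omega⟩
      simp only [show 2 ^ m + i - (2 ^ m - 1) = i + 1 by omega, List.getElem_cons_succ,
        List.getElem_map, List.getElem_reverse, ih, hlen]
      rw [add_assoc, regularFold_two_pow_add m (by omega) (by omega)]
      congr 2
      omega

theorem IsLimit.eq_regularFold {p : ℕ → ℤ} (hp : IsLimit (fun _ => 1) p) {n : ℕ} (hn : 0 < n) :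
    p n = regularFold n := by
  have hpaper : paper ((List.range n).map fun _ => 1) = foldAux (List.replicate n 1) := by
    rw [paper, List.map_const', List.length_range, List.reverse_replicate]
  have hk : n - 1 < (foldAux (List.replicate n 1)).length := by
    have := Nat.lt_two_pow_self (n := n)
    rw [length_foldAux_replicate_one]
    omega
  have := hp n (n - 1) (hpaper ▸ hk)
  rwa [Nat.sub_add_cancel hn, hpaper, List.getD_eq_getElem _ _ hk,
    getElem_foldAux_replicate_one, Nat.sub_add_cancel hn] at this

namespace IsRunEnds

variable {p q : ℕ → ℤ} {E : ℕ → ℕ}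

theorem congr_pos (hE : IsRunEnds p E) (hpq : ∀ m, 0 < m → p m = q m) : IsRunEnds q E := by
  refine ⟨hE.1, hE.2.1, fun m hm => ?_⟩
  rw [hE.2.2 m hm, hpq m hm, hpq (m + 1) (by omega)]

theorem succ_eq (hE : IsRunEnds p E) {n b : ℕ} (hlt : E n < b) (hb : p b ≠ p (b + 1))
    (hgap : ∀ m, E n < m → m < b → p m = p (m + 1)) : E (n + 1) = b := by
  obtain ⟨-, hmono, hends⟩ := hE
  have hnext : E n < E (n + 1) := hmono n.lt_succ_self
  rcases lt_trichotomy (E (n + 1)) b with h | h | h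
  · exact absurd (hgap _ hnext h) ((hends _ (by omega)).mp ⟨n + 1, by omega, rfl⟩)
  · exact h
  · obtain ⟨k, -, rfl⟩ := (hends b (by omega)).mpr hb
    have : n < k := hmono.lt_iff_lt.mp hlt
    have : k < n + 1 := hmono.lt_iff_lt.mp h
    omega

/-- `hpair` says that exactly one of the positions `2j+1`, `2j+2` ends a run. -/
theorem succ_eq_ite (hE : IsRunEnds p E)
    (hpair : ∀ j, p (2 * j + 1) = p (2 * j + 2) ↔ p (2 * j + 2) ≠ p (2 * j + 3)) (n : ℕ) :
    E (n + 1) = if p (2 * n + 1) = p (2 * n + 2) then 2 * n + 2 else 2 * n + 1 := by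
  induction n with
  | zero =>
    split_ifs with h
    · refine hE.succ_eq (by simp [hE.1]) ((hpair 0).mp h) fun m _ _ => ?_
      obtain rfl : m = 1 := by omega
      exact h
    · exact hE.succ_eq (by simp [hE.1]) h fun m _ _ => by omega
  | succ n ih =>
    have hgap : ∀ m, E (n + 1) < m → m < 2 * (n + 1) + 1 → p m = p (m + 1) := by
      intro m h₁ h₂
      split_ifs at ih with h
      · omega
      · obtain rfl : m = 2 * n + 2 := by omega
        exact not_not.mp ((hpair n).not.mp h)
    have hle : E (n + 1) < 2 * (n + 1) + 1 := by split_ifs at ih <;> omega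
    split_ifs with h
    · refine hE.succ_eq (by omega) ((hpair (n + 1)).mp h) fun m h₁ h₂ => ?_
      rcases (by omega : m < 2 * (n + 1) + 1 ∨ m = 2 * (n + 1) + 1) with hm | rfl
      · exact hgap m h₁ hm
      · exact h
    · exact hE.succ_eq hle h hgap

end IsRunEnds

theorem regularFold_two_mul_add_one_eq_iff (j : ℕ) :
    regularFold (2 * j + 1) = regularFold (2 * j + 2) ↔
      regularFold (2 * j + 2) ≠ regularFold (2 * j + 3) := by
  rw [regularFold_eq_neg_of_odd (b := 2 * j + 3) (by omega) (by omega)]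
  rcases regularFold_eq_one_or_eq_neg_one (2 * j + 2) with h | h <;>
    rcases regularFold_eq_one_or_eq_neg_one (2 * j + 3) with h' | h' <;>
    simp [h, h']

theorem regularFold_two_mul_add_one_eq {k : ℕ} (hk : k % 4 = 0 ∨ k % 8 = 5) :
    regularFold (2 * k + 1) = regularFold (2 * k + 2) := by
  rw [show 2 * k + 2 = 2 * (k + 1) by ring, regularFold_two_mul]
  rcases hk with hk | hk
  · rw [regularFold_of_mod_four_eq_one (by omega), regularFold_of_mod_four_eq_one (by omega)]
  · rw [show k + 1 = 2 * (k / 2 + 1) by omega, regularFold_two_mul,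
      regularFold_of_mod_four_eq_three (by omega), regularFold_of_mod_four_eq_three (by omega)]

theorem regularFold_two_mul_add_one_ne {k : ℕ} (hk : k % 4 = 2 ∨ k % 8 = 1) :
    regularFold (2 * k + 1) ≠ regularFold (2 * k + 2) := by
  rw [show 2 * k + 2 = 2 * (k + 1) by ring, regularFold_two_mul]
  rcases hk with hk | hk
  · rw [regularFold_of_mod_four_eq_one (by omega), regularFold_of_mod_four_eq_three (by omega)]
    decide
  · rw [show k + 1 = 2 * (k / 2 + 1) by omega, regularFold_two_mul,
      regularFold_of_mod_four_eq_three (by omega), regularFold_of_mod_four_eq_one (by omega)]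
    decide

theorem IsRunEnds.regularFold_spec {E : ℕ → ℕ} (hE : IsRunEnds regularFold E) (n : ℕ) :
    (n % 4 = 1 ∨ n % 8 = 6 → E n = 2 * n) ∧ (n % 4 = 3 ∨ n % 8 = 2 → E n + 1 = 2 * n) ∧
      E n ≤ 2 * n ∧ 2 * n ≤ E n + 1 := by
  rcases n with _ | k
  · simp [hE.1]
  · rw [hE.succ_eq_ite regularFold_two_mul_add_one_eq_iff k]
    split_ifs with h
    · exact ⟨fun _ => by ring, fun hk => absurd h (regularFold_two_mul_add_one_ne (by omega)),
        by omega, by omega⟩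
    · exact ⟨fun hk => absurd (regularFold_two_mul_add_one_eq (by omega)) h, fun _ => by ring,
        by omega, by omega⟩

theorem regular_run_length_one_iff (p : ℕ → ℤ) (E : ℕ → ℕ)
    (hp : IsLimit (fun _ => 1) p) (hE : IsRunEnds p E) :
    ∀ n, 1 ≤ n → (E n - E (n - 1) = 1 ↔ (n % 8 = 2 ∨ n % 8 = 7)) := by
  have hE' : IsRunEnds regularFold E := hE.congr_pos fun m hm => hp.eq_regularFold hm
  intro n _
  have := hE'.regularFold_spec n
  have := hE'.regularFold_spec (n - 1)
  omega
end

section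
/- The ending position of the n-th maximal run of any infinite paperfolding sequence is either 2n or 2n - 1, for all n ≥ 1. -/
def EvenAlternating (w : List ℤ) : Prop :=
  ∀ k (h : 2 * k + 2 < w.length), w[2 * k + 2] = -w[2 * k]

namespace EvenAlternating

variable {w : List ℤ}

theorem reverse_map_neg (hw : EvenAlternating w) (hodd : Odd w.length) :
    EvenAlternating (w.reverse.map (fun x => -x)) := by
  obtain ⟨j, hj⟩ := hodd
  intro k hk
  simp only [List.length_map, List.length_reverse] at hk
  have h := hw (j - k - 1) (by omega)
  grind

theorem append_cons_reverse_map_neg (hw : EvenAlternating w) (hodd : Odd w.length) (a : ℤ) :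
    EvenAlternating (w ++ a :: w.reverse.map (fun x => -x)) := by
  have hrev := hw.reverse_map_neg hodd
  obtain ⟨j, hj⟩ := hodd
  intro k hk
  simp only [List.length_append, List.length_cons, List.length_map, List.length_reverse] at hk
  rcases lt_trichotomy k j with hlt | rfl | hgt
  · have h := hw k (by omega)
    grind
  · grind
  · have h := hrev (k - j - 1) (by simp only [List.length_map, List.length_reverse]; omega)
    grind

end EvenAlternating

theorem foldAux_length (l : List ℤ) : (foldAux l).length = 2 ^ l.length - 1 := by
  induction l with
  | nil => rfl
  | cons a l ih =>
    have := l.length.one_le_two_pow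
    simp only [foldAux, List.length_append, List.length_cons, List.length_map,
      List.length_reverse, ih, pow_succ]
    omega

theorem odd_foldAux_length {l : List ℤ} (hl : l ≠ []) : Odd (foldAux l).length := by
  rw [foldAux_length]
  exact Nat.Even.sub_odd Nat.one_le_two_pow
    (Nat.even_pow.2 ⟨even_two, mt List.length_eq_zero_iff.1 hl⟩) odd_one

theorem foldAux_evenAlternating (l : List ℤ) : EvenAlternating (foldAux l) := by
  induction l with
  | nil => intro k hk; simp [foldAux] at hk
  | cons a l ih =>
    rcases eq_or_ne l [] with rfl | hl
    · intro k hk; simp [foldAux] at hk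
    · exact ih.append_cons_reverse_map_neg (odd_foldAux_length hl) a

theorem forall_mem_foldAux {s : Set ℤ} (hs : ∀ x ∈ s, -x ∈ s) {l : List ℤ}
    (hl : ∀ a ∈ l, a ∈ s) : ∀ x ∈ foldAux l, x ∈ s := by
  induction l with
  | nil => simp [foldAux]
  | cons a l ih =>
    have ih := ih fun b hb => hl b (List.mem_cons_of_mem a hb)
    simp only [foldAux, List.mem_append, List.mem_cons, List.mem_map, List.mem_reverse]
    rintro x (hx | rfl | ⟨y, hy, rfl⟩)
    · exact ih x hx
    · exact hl x List.mem_cons_self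
    · exact hs y (ih y hy)

theorem paper_range_map_length (f : ℕ → ℤ) (m : ℕ) :
    (paper ((List.range m).map f)).length = 2 ^ m - 1 := by
  simp [paper, foldAux_length]

namespace IsLimit

variable {f p : ℕ → ℤ}

theorem apply_succ_eq_getElem (hp : IsLimit f p) {m k : ℕ}
    (hk : k < (paper ((List.range m).map f)).length) :
    p (k + 1) = (paper ((List.range m).map f))[k] := by
  rw [hp m k hk, List.getD_eq_getElem]

theorem apply_succ_eq_neg_one_or_eq_one (hf : ∀ n, f n = -1 ∨ f n = 1) (hp : IsLimit f p)
    (k : ℕ) : p (k + 1) = -1 ∨ p (k + 1) = 1 := by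
  have hk : k < (paper ((List.range (k + 1)).map f)).length := by
    rw [paper_range_map_length]
    have := (k + 1).lt_two_pow_self
    omega
  rw [hp.apply_succ_eq_getElem hk]
  refine forall_mem_foldAux (s := {-1, 1}) (by simp [or_comm]) ?_ _ (List.getElem_mem _)
  simpa using fun i _ => hf i

theorem apply_two_mul_add_three (hp : IsLimit f p) (k : ℕ) : p (2 * k + 3) = -p (2 * k + 1) := by
  have hk : 2 * k + 2 < (paper ((List.range (2 * k + 3)).map f)).length := by
    rw [paper_range_map_length]
    have := (2 * k + 3).lt_two_pow_self
    omega
  rw [hp.apply_succ_eq_getElem hk, hp.apply_succ_eq_getElem (m := 2 * k + 3) (by omega)]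
  exact foldAux_evenAlternating _ k hk

theorem ne_succ_iff_succ_eq (hf : ∀ n, f n = -1 ∨ f n = 1) (hp : IsLimit f p) (k : ℕ) :
    p (2 * k + 1) ≠ p (2 * k + 2) ↔ p (2 * k + 2) = p (2 * k + 3) := by
  have h₁ := hp.apply_succ_eq_neg_one_or_eq_one hf (2 * k)
  have h₂ : p (2 * k + 2) = -1 ∨ p (2 * k + 2) = 1 :=
    hp.apply_succ_eq_neg_one_or_eq_one hf (2 * k + 1)
  rw [hp.apply_two_mul_add_three k]
  rcases h₁ with h₁ | h₁ <;> rcases h₂ with h₂ | h₂ <;> norm_num [h₁, h₂]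

end IsLimit

theorem two_mul_sub_one_le_and_le_two_mul_of_one_per_pair {R : ℕ → Prop} {E : ℕ → ℕ}
    (hR : ∀ k, R (2 * k + 1) ↔ ¬R (2 * k + 2)) (hE0 : E 0 = 0) (hE : StrictMono E)
    (hRE : ∀ m, 1 ≤ m → ((∃ n, 1 ≤ n ∧ E n = m) ↔ R m)) (n : ℕ) :
    2 * n - 1 ≤ E n ∧ E n ≤ 2 * n := by
  induction n with
  | zero => simp [hE0]
  | succ n ih =>
    have hR_apply : ∀ j, 1 ≤ j → R (E j) := fun j hj =>
      (hRE (E j) (by have := hE (show 0 < j by omega); omega)).1 ⟨j, hj, rfl⟩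
    have le_of_R : ∀ m, 1 ≤ m → R m → E n < m → E (n + 1) ≤ m := by
      intro m hm hRm hnm
      obtain ⟨j, -, rfl⟩ := (hRE m hm).2 hRm
      exact hE.monotone (hE.lt_iff_lt.1 hnm)
    have hlt : E n < E (n + 1) := hE n.lt_succ_self
    constructor
    · rcases Nat.eq_zero_or_pos n with rfl | hn
      · omega
      · by_contra h
        have hEn : E n = 2 * (n - 1) + 1 := by omega
        have hEn1 : E (n + 1) = 2 * (n - 1) + 2 := by omega
        exact (hR (n - 1)).1 (hEn ▸ hR_apply n hn) (hEn1 ▸ hR_apply (n + 1) (by omega))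
    · by_cases h : R (2 * n + 1)
      · have := le_of_R _ (by omega) h (by omega)
        omega
      · exact le_of_R _ (by omega) (not_not.1 (mt (hR n).2 h)) (by omega)

theorem runEnd_two_n_or_pred (f p : ℕ → ℤ) (E : ℕ → ℕ)
    (hf : ∀ n, f n = -1 ∨ f n = 1) (hp : IsLimit f p) (hE : IsRunEnds p E) :
    ∀ n, 1 ≤ n → E n = 2 * n ∨ E n = 2 * n - 1 := by
  obtain ⟨hE0, hE, hRE⟩ := hE
  intro n _
  have := two_mul_sub_one_le_and_le_two_mul_of_one_per_pair (R := fun m => p m ≠ p (m + 1))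
    (fun k => (hp.ne_succ_iff_succ_eq hf k).trans not_not.symm) hE0 hE hRE n
  omega
end
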